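/- Let $-\infty \le u_1 < u_2 \le \infty$ and $-\infty \le v_1 < v_2 \le \infty$. Let $f,g:[u_1,u_2]\times[v_1,v_2]\to\mathbb{R}$ be continuous nonnegative functions, and $h:[u_1,u_2]\to\mathbb{R}$, $k:[v_1,v_2]\to\mathbb{R}$ continuous nonnegative functions. Suppose that for all $(u,v)$, $f(u,v)+g(u,v) \le A + B\left[\int_{u_1}^u h(u')f(u',v)\,du' + \int_{v_1}^v k(v')g(u,v')\,dv'\right]$, where $A,B>0$. Then for every $\eta>0$ and every $\beta \ge 2(1+\eta)/\eta$, one has $f(u,v)+g(u,v) \le (1+\eta)A\, e^{\beta B\left[\int_{u_1}^u h(u')\,du' + \int_{v_1}^v k(v')\,dv'\right]}$ for all $(u,v)\in[u_1,u_2]\times[v_1,v_2]$. -/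

import Mathlib

/-!
Let `E = exp (β B (H + K))`, where `H`, `K` are the primitives of `h`, `k` from `u₁`, `v₁`, and
let `M` be the best constant in `f + g ≤ M E` on the rectangle; it is attained by compactness.
Inserting `f, g ≤ M E` into the integral inequality and using
`∫ h e^{βBH} ≤ e^{βBH} / (βB)` gives `f + g ≤ A + (2M/β) E`. At a point where the best constant
is attained this reads `M ≤ A + 2M/β`, i.e. `M ≤ βA / (β - 2) ≤ (1 + η) A`.
-/

open MeasureTheory Set intervalIntegral Real

lemma continuousOn_integral_of_continuousOn {w : ℝ → ℝ} {a b : ℝ} (hab : a ≤ b)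
    (hw : ContinuousOn w (Icc a b)) : ContinuousOn (fun x => ∫ t in a..x, w t) (Icc a b) := by
  have := continuousOn_primitive_interval (μ := volume) (f := w) (a := a) (b := b)
  rw [uIcc_of_le hab] at this
  exact this hw.integrableOn_Icc

lemma hasDerivAt_integral_of_mem_Ioo {w : ℝ → ℝ} {a b x : ℝ} (hw : ContinuousOn w (Icc a b))
    (hx : x ∈ Ioo a b) : HasDerivAt (fun y => ∫ t in a..y, w t) (w x) x :=
  integral_hasDerivAt_right
    ((hw.mono (Icc_subset_Icc_right hx.2.le)).intervalIntegrable_of_Icc hx.1.le)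
    ((hw.mono Ioo_subset_Icc_self).stronglyMeasurableAtFilter isOpen_Ioo x hx)
    (hw.continuousAt (Icc_mem_nhds hx.1 hx.2))

lemma integral_mul_exp_integral {w : ℝ → ℝ} {a b : ℝ} (hab : a ≤ b)
    (hw : ContinuousOn w (Icc a b)) {c : ℝ} (hc : c ≠ 0) (d : ℝ) :
    ∫ s in a..b, w s * exp (c * ((∫ t in a..s, w t) + d)) =
      (exp (c * ((∫ t in a..b, w t) + d)) - exp (c * d)) / c := by
  have hW := continuousOn_integral_of_continuousOn hab hw
  have hF : ContinuousOn (fun s => exp (c * ((∫ t in a..s, w t) + d)) / c) (Icc a b) := by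
    fun_prop
  have hint : IntervalIntegrable (fun s => w s * exp (c * ((∫ t in a..s, w t) + d))) volume a b :=
    ContinuousOn.intervalIntegrable_of_Icc hab (by fun_prop)
  rw [integral_eq_sub_of_hasDerivAt_of_le hab hF ?deriv hint]
  · simp only [integral_same, zero_add, sub_div]
  · intro x hx
    refine ((((hasDerivAt_integral_of_mem_Ioo hw hx).add_const d).const_mul c).exp.div_const c
      ).congr_deriv ?_
    field_simp

lemma integral_mul_le_of_le_exp_integral {w φ : ℝ → ℝ} {a b c d M : ℝ} (hab : a ≤ b)
    (hw : ContinuousOn w (Icc a b)) (hw0 : ∀ s ∈ Icc a b, 0 ≤ w s)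
    (hφ : ContinuousOn φ (Icc a b)) (hc : 0 < c) (hM : 0 ≤ M)
    (hφM : ∀ s ∈ Icc a b, φ s ≤ M * exp (c * ((∫ t in a..s, w t) + d))) :
    ∫ s in a..b, w s * φ s ≤ M * exp (c * ((∫ t in a..b, w t) + d)) / c := by
  have hW := continuousOn_integral_of_continuousOn hab hw
  calc ∫ s in a..b, w s * φ s
      ≤ ∫ s in a..b, M * (w s * exp (c * ((∫ t in a..s, w t) + d))) := by
        refine integral_mono_on hab ((hw.mul hφ).intervalIntegrable_of_Icc hab)
          (ContinuousOn.intervalIntegrable_of_Icc hab (by fun_prop)) fun s hs => ?_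
        rw [mul_left_comm]
        exact mul_le_mul_of_nonneg_left (hφM s hs) (hw0 s hs)
    _ = M * ((exp (c * ((∫ t in a..b, w t) + d)) - exp (c * d)) / c) := by
        rw [intervalIntegral.integral_const_mul, integral_mul_exp_integral hab hw hc.ne']
    _ ≤ M * exp (c * ((∫ t in a..b, w t) + d)) / c := by
        rw [mul_div_assoc]
        gcongr
        exact sub_le_self _ (exp_pos _).le

lemma add_le_add_of_le_mul_exp_integral {u1 u2 v1 v2 A B β M : ℝ} {f g : ℝ → ℝ → ℝ}
    {h k : ℝ → ℝ} (hB : 0 < B) (hβ : 0 < β) (hM : 0 ≤ M)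
    (hf : ContinuousOn (fun p : ℝ × ℝ => f p.1 p.2) (Icc u1 u2 ×ˢ Icc v1 v2))
    (hg : ContinuousOn (fun p : ℝ × ℝ => g p.1 p.2) (Icc u1 u2 ×ˢ Icc v1 v2))
    (hh : ContinuousOn h (Icc u1 u2)) (hk : ContinuousOn k (Icc v1 v2))
    (hf0 : ∀ u ∈ Icc u1 u2, ∀ v ∈ Icc v1 v2, 0 ≤ f u v)
    (hg0 : ∀ u ∈ Icc u1 u2, ∀ v ∈ Icc v1 v2, 0 ≤ g u v)
    (hh0 : ∀ u ∈ Icc u1 u2, 0 ≤ h u) (hk0 : ∀ v ∈ Icc v1 v2, 0 ≤ k v)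
    (hyp : ∀ u ∈ Icc u1 u2, ∀ v ∈ Icc v1 v2,
      f u v + g u v ≤ A + B * ((∫ u' in u1..u, h u' * f u' v) + ∫ v' in v1..v, k v' * g u v'))
    (hbound : ∀ u ∈ Icc u1 u2, ∀ v ∈ Icc v1 v2,
      f u v + g u v ≤ M * exp (β * B * ((∫ u' in u1..u, h u') + ∫ v' in v1..v, k v')))
    {u v : ℝ} (hu : u ∈ Icc u1 u2) (hv : v ∈ Icc v1 v2) :
    f u v + g u v ≤
      A + 2 * M / β * exp (β * B * ((∫ u' in u1..u, h u') + ∫ v' in v1..v, k v')) := by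
  set E := exp (β * B * ((∫ u' in u1..u, h u') + ∫ v' in v1..v, k v'))
  have hsu : Icc u1 u ⊆ Icc u1 u2 := Icc_subset_Icc_right hu.2
  have hsv : Icc v1 v ⊆ Icc v1 v2 := Icc_subset_Icc_right hv.2
  have hI : ∫ u' in u1..u, h u' * f u' v ≤ M * E / (β * B) :=
    integral_mul_le_of_le_exp_integral hu.1 (hh.mono hsu) (fun s hs => hh0 s (hsu hs))
      (hf.comp (continuousOn_id.prodMk continuousOn_const) fun s hs => ⟨hsu hs, hv⟩)
      (mul_pos hβ hB) hM
      fun s hs => (le_add_of_nonneg_right (hg0 s (hsu hs) v hv)).trans (hbound s (hsu hs) v hv)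
  have hJ : ∫ v' in v1..v, k v' * g u v' ≤ M * E / (β * B) := by
    simp only [E, add_comm (∫ u' in u1..u, h u')]
    refine integral_mul_le_of_le_exp_integral hv.1 (hk.mono hsv) (fun t ht => hk0 t (hsv ht))
      (hg.comp (continuousOn_const.prodMk continuousOn_id) fun t ht => ⟨hu, hsv ht⟩)
      (mul_pos hβ hB) hM fun t ht => ?_
    rw [add_comm]
    exact (le_add_of_nonneg_left (hf0 u hu t (hsv ht))).trans (hbound u hu t (hsv ht))
  calc f u v + g u v ≤ A + B * (M * E / (β * B) + M * E / (β * B)) := by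
        grw [hyp u hu v hv, hI, hJ]
    _ = A + 2 * M / β * E := by field_simp; ring

lemma IsCompact.exists_forall_le_div_mul {X : Type*} [TopologicalSpace X] {s : Set X}
    (hs : IsCompact s) (hne : s.Nonempty) {F E : X → ℝ} (hF : ContinuousOn F s)
    (hE : ContinuousOn E s) (hE0 : ∀ x ∈ s, 0 < E x) :
    ∃ p ∈ s, ∀ x ∈ s, F x ≤ F p / E p * E x := by
  obtain ⟨p, hp, hmax⟩ := hs.exists_isMaxOn hne (hF.div hE fun x hx => (hE0 x hx).ne')
  exact ⟨p, hp, fun x hx => (div_le_iff₀ (hE0 x hx)).1 (hmax hx)⟩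

lemma le_one_add_mul_of_mul_le_add {M A β η e : ℝ} (hη : 0 < η) (hβ : 2 * (1 + η) / η ≤ β)
    (hA : 0 ≤ A) (he : 1 ≤ e) (hM : M * e ≤ A + 2 * M / β * e) : M ≤ (1 + η) * A := by
  rw [div_le_iff₀ hη] at hβ
  have hβ2 : 2 < β := by nlinarith
  have hM' : M ≤ A + 2 * M / β :=
    le_of_mul_le_mul_right (by nlinarith) (by linarith : (0 : ℝ) < e)
  have hMβ : M * β ≤ A * β + 2 * M := by
    have := mul_le_mul_of_nonneg_right hM' (by linarith : (0 : ℝ) ≤ β)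
    rwa [add_mul, div_mul_cancel₀ _ (by linarith)] at this
  nlinarith [mul_nonneg hA (sub_nonneg.2 hβ)]

theorem gronwall_two_variables_general
    (u1 u2 v1 v2 A B : ℝ)
    (hA : 0 < A) (hB : 0 < B)
    (f g : ℝ → ℝ → ℝ) (h k : ℝ → ℝ)
    (hf : ContinuousOn (fun p : ℝ × ℝ => f p.1 p.2) (Icc u1 u2 ×ˢ Icc v1 v2))
    (hg : ContinuousOn (fun p : ℝ × ℝ => g p.1 p.2) (Icc u1 u2 ×ˢ Icc v1 v2))
    (hh : ContinuousOn h (Icc u1 u2)) (hk : ContinuousOn k (Icc v1 v2))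
    (hf0 : ∀ u ∈ Icc u1 u2, ∀ v ∈ Icc v1 v2, 0 ≤ f u v)
    (hg0 : ∀ u ∈ Icc u1 u2, ∀ v ∈ Icc v1 v2, 0 ≤ g u v)
    (hh0 : ∀ u ∈ Icc u1 u2, 0 ≤ h u)
    (hk0 : ∀ v ∈ Icc v1 v2, 0 ≤ k v)
    (hyp : ∀ u ∈ Icc u1 u2, ∀ v ∈ Icc v1 v2,
      f u v + g u v ≤ A + B * ((∫ u' in u1..u, h u' * f u' v) + ∫ v' in v1..v, k v' * g u v')) :
    ∀ η > 0, ∀ β, 2 * (1 + η) / η ≤ β →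
      ∀ u ∈ Icc u1 u2, ∀ v ∈ Icc v1 v2,
        f u v + g u v ≤ (1 + η) * A *
          Real.exp (β * B * ((∫ u' in u1..u, h u') + ∫ v' in v1..v, k v')) := by
  intro η hη β hβ u hu v hv
  have hβ0 : 0 < β := (div_pos (by positivity) hη).trans_le hβ
  set E : ℝ → ℝ → ℝ := fun u v => exp (β * B * ((∫ u' in u1..u, h u') + ∫ v' in v1..v, k v'))
  have hE : ContinuousOn (fun p : ℝ × ℝ => E p.1 p.2) (Icc u1 u2 ×ˢ Icc v1 v2) := by
    have hH := continuousOn_integral_of_continuousOn (hu.1.trans hu.2) hh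
    have hK := continuousOn_integral_of_continuousOn (hv.1.trans hv.2) hk
    exact (((hH.comp continuousOn_fst fun p hp => hp.1).add
      (hK.comp continuousOn_snd fun p hp => hp.2)).const_smul (β * B)).rexp
  obtain ⟨p, ⟨hp1, hp2⟩, hbound⟩ := (isCompact_Icc.prod isCompact_Icc).exists_forall_le_div_mul
    ⟨(u, v), hu, hv⟩ (hf.add hg) hE fun _ _ => exp_pos _
  set M := (f p.1 p.2 + g p.1 p.2) / E p.1 p.2
  have hM0 : 0 ≤ M := div_nonneg (add_nonneg (hf0 _ hp1 _ hp2) (hg0 _ hp1 _ hp2)) (exp_pos _).le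
  have hstep := add_le_add_of_le_mul_exp_integral hB hβ0 hM0 hf hg hh hk hf0 hg0 hh0 hk0 hyp
    (fun u hu v hv => hbound (u, v) ⟨hu, hv⟩) hp1 hp2
  have hEp : 1 ≤ E p.1 p.2 := one_le_exp (mul_nonneg (mul_pos hβ0 hB).le (add_nonneg
    (integral_nonneg hp1.1 fun s hs => hh0 s ⟨hs.1, hs.2.trans hp1.2⟩)
    (integral_nonneg hp2.1 fun t ht => hk0 t ⟨ht.1, ht.2.trans hp2.2⟩)))
  have hMp : M * E p.1 p.2 = f p.1 p.2 + g p.1 p.2 := div_mul_cancel₀ _ (exp_pos _).ne'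
  have hMA : M ≤ (1 + η) * A := le_one_add_mul_of_mul_le_add hη hβ hA.le hEp (hMp ▸ hstep)
  calc f u v + g u v ≤ M * E u v := hbound (u, v) ⟨hu, hv⟩
    _ ≤ (1 + η) * A * E u v := by gcongr

/-- Two-variable Grönwall-type lemma (Lemma 4.1 of the paper). -/
theorem gronwall_two_variables
    (u1 u2 v1 v2 A B : ℝ) (hu : u1 < u2) (hv : v1 < v2)
    (hA : 0 < A) (hB : 0 < B)
    (f g : ℝ → ℝ → ℝ) (h k : ℝ → ℝ)
    (hf : ContinuousOn (fun p : ℝ × ℝ => f p.1 p.2) (Icc u1 u2 ×ˢ Icc v1 v2))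
    (hg : ContinuousOn (fun p : ℝ × ℝ => g p.1 p.2) (Icc u1 u2 ×ˢ Icc v1 v2))
    (hh : ContinuousOn h (Icc u1 u2)) (hk : ContinuousOn k (Icc v1 v2))
    (hf0 : ∀ u ∈ Icc u1 u2, ∀ v ∈ Icc v1 v2, 0 ≤ f u v)
    (hg0 : ∀ u ∈ Icc u1 u2, ∀ v ∈ Icc v1 v2, 0 ≤ g u v)
    (hh0 : ∀ u ∈ Icc u1 u2, 0 ≤ h u)
    (hk0 : ∀ v ∈ Icc v1 v2, 0 ≤ k v)
    (hyp : ∀ u ∈ Icc u1 u2, ∀ v ∈ Icc v1 v2,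
      f u v + g u v ≤ A + B * ((∫ u' in u1..u, h u' * f u' v) + ∫ v' in v1..v, k v' * g u v')) :
    ∀ η > 0, ∀ β, 2 * (1 + η) / η ≤ β →
      ∀ u ∈ Icc u1 u2, ∀ v ∈ Icc v1 v2,
        f u v + g u v ≤ (1 + η) * A *
          Real.exp (β * B * ((∫ u' in u1..u, h u') + ∫ v' in v1..v, k v')) :=
  gronwall_two_variables_general u1 u2 v1 v2 A B hA hB f g h k hf hg hh hk hf0 hg0 hh0 hk0 hyp
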